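/- arXiv:2602.12273 — 3 statements merged into one kernel-verified Lean document; each statement's English description precedes it below -/
import Mathlib

section
/- Let U, Y be real Hilbert spaces, S : U → Y a bounded linear operator with adjoint S*, N : U → U bounded linear self-adjoint with ⟨Nu,u⟩ ≥ c₀‖u‖² (c₀ > 0), and θ : U → ℝ ∪ {+∞} convex, lower semicontinuous, proper. For z ∈ Y, define T₀(z) = u* where (u*, p*) is the unique solution of the system 0 ∈ Nu* + ∂θ(u*) + S*p*, 0 = Su* − p* + z. Then T₀ is Lipschitz continuous with Lipschitz constant c₀⁻¹‖S‖. -/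
/-! Subdifferentials of proper functions are monotone, so `N + ∂θ` is `c₀`-strongly monotone.
Testing the difference of the two optimality conditions against `u₁ - u₂` and eliminating
`p₁ - p₂ = S (u₁ - u₂) + (z₁ - z₂)` gives
`c₀ ‖u₁ - u₂‖² ≤ -‖S (u₁ - u₂)‖² - ⟪z₁ - z₂, S (u₁ - u₂)⟫ ≤ ‖S‖ ‖z₁ - z₂‖ ‖u₁ - u₂‖`. -/

open MeasureTheory RealInnerProductSpace

noncomputable section

/-- The convex subdifferential of an extended-real-valued function `θ` at `u`. -/
def subdiff {U : Type*} [NormedAddCommGroup U] [InnerProductSpace ℝ U]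
    (θ : U → EReal) (u : U) : Set U :=
  {g | ∀ v : U, θ u + ((⟪g, v - u⟫ : ℝ) : EReal) ≤ θ v}

section Subdiff

variable {U : Type*} [NormedAddCommGroup U] [InnerProductSpace ℝ U] {θ : U → EReal}

theorem ne_top_of_mem_subdiff (hproper : ∃ v : U, θ v ≠ ⊤) {u g : U} (hg : g ∈ subdiff θ u) :
    θ u ≠ ⊤ := by
  obtain ⟨v, hv⟩ := hproper
  intro htop
  have h := hg v
  rw [htop, EReal.top_add_coe] at h
  exact hv (top_le_iff.mp h)

theorem inner_sub_nonneg_of_mem_subdiff (hne_bot : ∀ u : U, θ u ≠ ⊥)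
    (hproper : ∃ v : U, θ v ≠ ⊤) {u₁ u₂ g₁ g₂ : U}
    (hg₁ : g₁ ∈ subdiff θ u₁) (hg₂ : g₂ ∈ subdiff θ u₂) :
    0 ≤ ⟪g₁ - g₂, u₁ - u₂⟫ := by
  have k₁ := hg₁ u₂
  have k₂ := hg₂ u₁
  rw [← EReal.coe_toReal (ne_top_of_mem_subdiff hproper hg₁) (hne_bot u₁),
    ← EReal.coe_toReal (ne_top_of_mem_subdiff hproper hg₂) (hne_bot u₂),
    ← EReal.coe_add, EReal.coe_le_coe_iff] at k₁ k₂
  have hswap : ⟪g₁, u₂ - u₁⟫ = -⟪g₁, u₁ - u₂⟫ := by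
    rw [← inner_neg_right, neg_sub]
  rw [inner_sub_left]
  linarith

theorem strongly_monotone_of_mem_subdiff (hne_bot : ∀ u : U, θ u ≠ ⊥)
    (hproper : ∃ v : U, θ v ≠ ⊤) (N : U →L[ℝ] U) {c₀ : ℝ}
    (hcoer : ∀ u : U, c₀ * ‖u‖ ^ 2 ≤ ⟪N u, u⟫) {u₁ u₂ v₁ v₂ : U}
    (h₁ : v₁ - N u₁ ∈ subdiff θ u₁) (h₂ : v₂ - N u₂ ∈ subdiff θ u₂) :
    c₀ * ‖u₁ - u₂‖ ^ 2 ≤ ⟪v₁ - v₂, u₁ - u₂⟫ := by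
  have hmono := inner_sub_nonneg_of_mem_subdiff hne_bot hproper h₁ h₂
  have hsplit : v₁ - N u₁ - (v₂ - N u₂) = (v₁ - v₂) - N (u₁ - u₂) := by
    rw [map_sub]; abel
  rw [hsplit, inner_sub_left] at hmono
  linarith [hcoer (u₁ - u₂)]

end Subdiff

theorem le_inv_mul_of_mul_sq_le_mul {c K x : ℝ} (hc : 0 < c) (hK : 0 ≤ K) (hx : 0 ≤ x)
    (h : c * x ^ 2 ≤ K * x) : x ≤ c⁻¹ * K := by
  rw [le_inv_mul_iff₀ hc]
  rcases hx.eq_or_lt with rfl | hpos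
  · simpa using hK
  · nlinarith

theorem stmt1_general
    {U Y : Type*} [NormedAddCommGroup U] [InnerProductSpace ℝ U] [CompleteSpace U]
    [NormedAddCommGroup Y] [InnerProductSpace ℝ Y] [CompleteSpace Y]
    (S : U →L[ℝ] Y)
    (N : U →L[ℝ] U)
    (c₀ : ℝ) (hc₀ : 0 < c₀) (hcoer : ∀ u : U, c₀ * ‖u‖ ^ 2 ≤ ⟪N u, u⟫)
    (θ : U → EReal)
    (hne_bot : ∀ u : U, θ u ≠ ⊥) (hproper : ∃ u : U, θ u ≠ ⊤) :
    ∀ (z₁ z₂ : Y) (u₁ u₂ : U) (p₁ p₂ : Y),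
      (-(N u₁) - (ContinuousLinearMap.adjoint S) p₁ ∈ subdiff θ u₁) →
      S u₁ - p₁ + z₁ = 0 →
      (-(N u₂) - (ContinuousLinearMap.adjoint S) p₂ ∈ subdiff θ u₂) →
      S u₂ - p₂ + z₂ = 0 →
      ‖u₁ - u₂‖ ≤ c₀⁻¹ * ‖S‖ * ‖z₁ - z₂‖ := by
  intro z₁ z₂ u₁ u₂ p₁ p₂ h₁ hS₁ h₂ hS₂
  rw [neg_sub_comm] at h₁ h₂
  have hstrong := strongly_monotone_of_mem_subdiff hne_bot hproper N hcoer h₁ h₂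
  set d := u₁ - u₂
  set w := z₁ - z₂
  have hp : p₁ - p₂ = S d + w := by
    rw [map_sub]
    linear_combination (norm := module) hS₂ - hS₁
  have hlin : ⟪-(S.adjoint p₁) - -(S.adjoint p₂), d⟫ = -(‖S d‖ ^ 2 + ⟪w, S d⟫) := by
    rw [neg_sub_neg, ← map_sub, ContinuousLinearMap.adjoint_inner_left, ← neg_sub, hp,
      inner_neg_left, inner_add_left, real_inner_self_eq_norm_sq]
  have hbound : c₀ * ‖d‖ ^ 2 ≤ (‖S‖ * ‖w‖) * ‖d‖ :=
    calc c₀ * ‖d‖ ^ 2 ≤ -(‖S d‖ ^ 2 + ⟪w, S d⟫) := hlin ▸ hstrong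
      _ ≤ ‖w‖ * ‖S d‖ := by nlinarith [neg_le_of_abs_le (abs_real_inner_le_norm w (S d))]
      _ ≤ ‖w‖ * (‖S‖ * ‖d‖) := by gcongr; exact S.le_opNorm d
      _ = (‖S‖ * ‖w‖) * ‖d‖ := by ring
  rw [mul_assoc]
  exact le_inv_mul_of_mul_sq_le_mul hc₀ (by positivity) (norm_nonneg d) hbound

/-- the map `T₀ : z ↦ u*`, where `(u*, p*)` is the (unique) solution of
`0 ∈ Nu* + ∂θ(u*) + S*p*`, `0 = Su* − p* + z`, is Lipschitz with constant `c₀⁻¹‖S‖`. -/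
theorem stmt1
    {U Y : Type*} [NormedAddCommGroup U] [InnerProductSpace ℝ U] [CompleteSpace U]
    [NormedAddCommGroup Y] [InnerProductSpace ℝ Y] [CompleteSpace Y]
    (S : U →L[ℝ] Y)
    (N : U →L[ℝ] U) (hNsa : ∀ u v : U, ⟪N u, v⟫ = ⟪u, N v⟫)
    (c₀ : ℝ) (hc₀ : 0 < c₀) (hcoer : ∀ u : U, c₀ * ‖u‖ ^ 2 ≤ ⟪N u, u⟫)
    (θ : U → EReal)
    (hconv : ∀ u v : U, ∀ t : ℝ, 0 ≤ t → t ≤ 1 →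
      θ (t • u + (1 - t) • v) ≤ (t : EReal) * θ u + ((1 - t : ℝ) : EReal) * θ v)
    (hlsc : LowerSemicontinuous θ)
    (hne_bot : ∀ u : U, θ u ≠ ⊥) (hproper : ∃ u : U, θ u ≠ ⊤) :
    ∀ (z₁ z₂ : Y) (u₁ u₂ : U) (p₁ p₂ : Y),
      (-(N u₁) - (ContinuousLinearMap.adjoint S) p₁ ∈ subdiff θ u₁) →
      S u₁ - p₁ + z₁ = 0 →
      (-(N u₂) - (ContinuousLinearMap.adjoint S) p₂ ∈ subdiff θ u₂) →
      S u₂ - p₂ + z₂ = 0 →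
      ‖u₁ - u₂‖ ≤ c₀⁻¹ * ‖S‖ * ‖z₁ - z₂‖ :=
  stmt1_general S N c₀ hc₀ hcoer θ hne_bot hproper
end
end

section
/- Let ρ ∈ (0,1), c > 0, δ > 0, and let a sequence of nonnegative reals {a_k} satisfy a_{k+1} ≤ ρ a_k + cδ for all k ≥ 0. Fix ε₁ > (2/(1−ρ) + 1)cδ and set ρ̃ = ρ + cδ/(ε₁ − cδ). Then ρ < ρ̃ < (1+ρ)/2 < 1, and: (i) if a_k ≥ ε₁ − cδ then a_{k+1} ≤ ρ̃ a_k; (ii) if a_k < ε₁ − cδ then a_{k+1} < ε₁. Consequently, a_k < ε₁ for all k ≥ ⌈log_{ρ̃}((ε₁ − cδ)/a₀)⌉ + 1 (when a₀ > ε₁ − cδ). -/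
/-!
Write `L = ε₁ − cδ` and `ρ̃ = ρ + cδ/L`. Above the level `L` the perturbation is absorbed into
the rate, `cδ ≤ (cδ/L) a_k`, so the iterates contract geometrically with factor `ρ̃`; below `L`
one step can overshoot by at most `cδ`. Hence `{a < ε₁}` is forward invariant, and since
`ρ̃ᵏ a₀ < L` once `k > log_{ρ̃}(L/a₀)`, the iterates must have dropped below `L` by then.
-/

open Real

namespace PerturbedContraction

variable {a : ℕ → ℝ} {ρ b ε : ℝ}

lemma sub_pos_and_div_sub_lt_of_lt (hρ : ρ < 1) (hb : 0 < b) (hε : (2 / (1 - ρ) + 1) * b < ε) :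
    0 < ε - b ∧ b / (ε - b) < (1 - ρ) / 2 := by
  have h1ρ : 0 < 1 - ρ := by linarith
  have hgap : 2 * b < (ε - b) * (1 - ρ) := by
    have : (2 / (1 - ρ) + 1) * b = 2 * b / (1 - ρ) + b := by ring
    rw [← div_lt_iff₀ h1ρ]
    linarith
  have hL : 0 < ε - b := pos_of_mul_pos_left (by linarith) h1ρ.le
  refine ⟨hL, ?_⟩
  rw [div_lt_div_iff₀ hL two_pos]
  linarith

lemma succ_le_mul_of_le (hrec : ∀ k, a (k + 1) ≤ ρ * a k + b) (hb : 0 ≤ b) (hL : 0 < ε - b)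
    {k : ℕ} (hk : ε - b ≤ a k) : a (k + 1) ≤ (ρ + b / (ε - b)) * a k := by
  have habsorb : b ≤ b / (ε - b) * a k :=
    calc b = b / (ε - b) * (ε - b) := (div_mul_cancel₀ _ hL.ne').symm
      _ ≤ b / (ε - b) * a k := by gcongr
  linarith [hrec k]

lemma succ_lt_of_lt_sub (hrec : ∀ k, a (k + 1) ≤ ρ * a k + b) (hρ₀ : 0 < ρ) (hρ₁ : ρ ≤ 1)
    (hL : 0 ≤ ε - b) {k : ℕ} (hk : a k < ε - b) : a (k + 1) < ε := by
  have : ρ * a k < ε - b :=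
    calc ρ * a k < ρ * (ε - b) := by gcongr
      _ ≤ ε - b := mul_le_of_le_one_left hL hρ₁
  linarith [hrec k]

lemma lt_of_lt_of_index_le (hrec : ∀ k, a (k + 1) ≤ ρ * a k + b) (hρ₀ : 0 < ρ)
    (hb : 0 ≤ b) (hL : 0 < ε - b) (hr : ρ + b / (ε - b) ≤ 1) {j k : ℕ} (hjk : j ≤ k)
    (hj : a j < ε) : a k < ε := by
  induction k, hjk using Nat.le_induction with
  | base => exact hj
  | succ k _ ih =>
    rcases lt_or_ge (a k) (ε - b) with hlow | hhigh
    · have hρ₁ : ρ ≤ 1 := by linarith [div_nonneg hb hL.le]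
      exact succ_lt_of_lt_sub hrec hρ₀ hρ₁ hL.le hlow
    · calc a (k + 1) ≤ (ρ + b / (ε - b)) * a k := succ_le_mul_of_le hrec hb hL hhigh
        _ ≤ a k := mul_le_of_le_one_left (hL.le.trans hhigh) hr
        _ < ε := ih

lemma exists_le_lt_sub_of_logb_lt (hrec : ∀ k, a (k + 1) ≤ ρ * a k + b) (hb : 0 ≤ b)
    (hL : 0 < ε - b) (hr₀ : 0 < ρ + b / (ε - b)) (hr₁ : ρ + b / (ε - b) < 1) (ha₀ : 0 < a 0)
    {k : ℕ} (hk : logb (ρ + b / (ε - b)) ((ε - b) / a 0) < k) : ∃ j ≤ k, a j < ε - b := by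
  by_contra! habove
  have hdecay : a k ≤ (ρ + b / (ε - b)) ^ k * a 0 :=
    le_geom hr₀.le k fun j hj => succ_le_mul_of_le hrec hb hL (habove j hj.le)
  have hpow : (ρ + b / (ε - b)) ^ k < (ε - b) / a 0 := by
    rw [← rpow_natCast]
    exact (logb_lt_iff_lt_rpow_of_base_lt_one hr₀ hr₁ (by positivity)).mp hk
  have : (ρ + b / (ε - b)) ^ k * a 0 < ε - b := (lt_div_iff₀ ha₀).mp hpow
  linarith [habove k le_rfl]

end PerturbedContraction

open PerturbedContraction

theorem stmt5_general (ρ c δ : ℝ) (hρ₀ : 0 < ρ) (hρ₁ : ρ < 1) (hc : 0 < c) (hδ : 0 < δ)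
    (a : ℕ → ℝ)
    (hrec : ∀ k, a (k + 1) ≤ ρ * a k + c * δ)
    (ε₁ : ℝ) (hε₁ : (2 / (1 - ρ) + 1) * (c * δ) < ε₁) :
    ρ < ρ + c * δ / (ε₁ - c * δ) ∧
    ρ + c * δ / (ε₁ - c * δ) < (1 + ρ) / 2 ∧
    (1 + ρ) / 2 < 1 ∧
    (∀ k, ε₁ - c * δ ≤ a k → a (k + 1) ≤ (ρ + c * δ / (ε₁ - c * δ)) * a k) ∧
    (∀ k, a k < ε₁ - c * δ → a (k + 1) < ε₁) ∧
    (ε₁ - c * δ < a 0 →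
      ∀ k : ℕ, ⌈Real.logb (ρ + c * δ / (ε₁ - c * δ)) ((ε₁ - c * δ) / a 0)⌉ + 1 ≤ (k : ℤ) →
        a k < ε₁) := by
  have hb : 0 < c * δ := mul_pos hc hδ
  obtain ⟨hL, hrate⟩ := sub_pos_and_div_sub_lt_of_lt hρ₁ hb hε₁
  have hpert : 0 < c * δ / (ε₁ - c * δ) := div_pos hb hL
  refine ⟨by linarith, by linarith, by linarith,
    fun k => succ_le_mul_of_le hrec hb.le hL,
    fun k => succ_lt_of_lt_sub hrec hρ₀ hρ₁.le hL.le, fun ha₀ k hk => ?_⟩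
  have hlog : logb (ρ + c * δ / (ε₁ - c * δ)) ((ε₁ - c * δ) / a 0) < k := by
    have : (⌈logb (ρ + c * δ / (ε₁ - c * δ)) ((ε₁ - c * δ) / a 0)⌉ : ℝ) + 1 ≤ k := by
      exact_mod_cast hk
    linarith [Int.le_ceil (logb (ρ + c * δ / (ε₁ - c * δ)) ((ε₁ - c * δ) / a 0))]
  obtain ⟨j, hjk, hj⟩ := exists_le_lt_sub_of_logb_lt hrec hb.le hL (by linarith) (by linarith)
    (hL.trans ha₀) hlog
  exact lt_of_lt_of_index_le hrec hρ₀ hb.le hL (by linarith) hjk (by linarith)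

/-- scalar perturbed-contraction argument.  If `a_{k+1} ≤ ρ a_k + cδ`,
`ε₁ > (2/(1−ρ) + 1)cδ` and `ρ̃ = ρ + cδ/(ε₁ − cδ)`, then `ρ < ρ̃ < (1+ρ)/2 < 1`,
(i) `a_k ≥ ε₁ − cδ → a_{k+1} ≤ ρ̃ a_k`, (ii) `a_k < ε₁ − cδ → a_{k+1} < ε₁`, and
`a_k < ε₁` for all `k ≥ ⌈log_{ρ̃}((ε₁ − cδ)/a₀)⌉ + 1` (when `a₀ > ε₁ − cδ`). -/
theorem stmt5 (ρ c δ : ℝ) (hρ₀ : 0 < ρ) (hρ₁ : ρ < 1) (hc : 0 < c) (hδ : 0 < δ)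
    (a : ℕ → ℝ) (ha : ∀ k, 0 ≤ a k)
    (hrec : ∀ k, a (k + 1) ≤ ρ * a k + c * δ)
    (ε₁ : ℝ) (hε₁ : (2 / (1 - ρ) + 1) * (c * δ) < ε₁) :
    ρ < ρ + c * δ / (ε₁ - c * δ) ∧
    ρ + c * δ / (ε₁ - c * δ) < (1 + ρ) / 2 ∧
    (1 + ρ) / 2 < 1 ∧
    (∀ k, ε₁ - c * δ ≤ a k → a (k + 1) ≤ (ρ + c * δ / (ε₁ - c * δ)) * a k) ∧
    (∀ k, a k < ε₁ - c * δ → a (k + 1) < ε₁) ∧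
    (ε₁ - c * δ < a 0 →
      ∀ k : ℕ, ⌈Real.logb (ρ + c * δ / (ε₁ - c * δ)) ((ε₁ - c * δ) / a 0)⌉ + 1 ≤ (k : ℤ) →
        a k < ε₁) :=
  stmt5_general ρ c δ hρ₀ hρ₁ hc hδ a hrec ε₁ hε₁
end

section
/- Let a ≤ 0 ≤ b be real numbers, β ≥ 0, λ > 0, τ ≥ 0, and define ψ(r) = β|r| + I_{[a,b]}(r) on ℝ. Then for every s ∈ ℝ, the resolvent ((λ+τ) + ∂ψ)⁻¹(s) equals proj_{[a,b]}( [(|s| − β)/(λ+τ)]₊ · sgn(s) ), and this value admits the ReLU representation b − σ(b − a − σ(σ((s − β)/(λ+τ)) − σ((−s − β)/(λ+τ)) − a)), where σ(r) = max{0, r} and [r]₊ = max{0,r}. -/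
/-!
The objective `f(r) = c/2 · r² − s r + β|r|` is strictly convex when `c > 0` and `β ≥ 0`, so it has
at most one minimizer on `[a, b]`. Its global minimizer is the soft threshold
`u = [(|s| − β)/c]₊ · sgn s`: in each of the regimes `s > β`, `|s| ≤ β`, `s < −β` one checks
`(c u − s)(r − u) + β(|r| − |u|) ≥ 0`, which is `f r − f u − c/2 · (r − u)²`. Clamping `u` to
`[a, b]` gives a point between `r` and `u` for every `r ∈ [a, b]`, where the convex `f` is at most
`max (f r) (f u) = f r`. The ReLU formula is the identity
`min b (max a x) = b − σ(b − a − σ(x − a))` together with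
`[(|s| − β)/c]₊ · sgn s = σ((s − β)/c) − σ((−s − β)/c)`.
-/

open Set

lemma isMinOn_Icc_min_max {f : ℝ → ℝ} (hf : ConvexOn ℝ univ f) {u : ℝ}
    (hu : IsMinOn f univ u) (a b : ℝ) : IsMinOn f (Icc a b) (min b (max a u)) := by
  intro r ⟨har, hrb⟩
  have hseg : min b (max a u) ∈ segment ℝ r u := by
    rw [segment_eq_Icc']
    constructor <;> grind
  calc f (min b (max a u)) ≤ max (f r) (f u) := hf.le_on_segment trivial trivial hseg
    _ = f r := max_eq_left (hu (mem_univ r))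

lemma min_max_eq_sub_relu (a b x : ℝ) :
    min b (max a x) = b - max 0 (b - a - max 0 (x - a)) := by
  grind

noncomputable section

namespace Prox

def objective (c s β r : ℝ) : ℝ := c / 2 * r ^ 2 - s * r + β * |r|

def softThreshold (c β s : ℝ) : ℝ := max 0 ((|s| - β) / c) * Real.sign s

variable {c s β : ℝ}

lemma strictConvexOn_quadratic (hc : 0 < c) (s : ℝ) :
    StrictConvexOn ℝ univ (fun r : ℝ => c / 2 * r ^ 2 - s * r) := by
  refine ⟨convex_univ, fun x _ y _ hxy p q hp hq hpq => ?_⟩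
  obtain rfl : q = 1 - p := by linarith
  have hgap : 0 < c / 2 * (p * (1 - p)) * (x - y) ^ 2 :=
    mul_pos (mul_pos (by positivity) (mul_pos hp hq)) (sq_pos_of_ne_zero (sub_ne_zero.2 hxy))
  simp only [smul_eq_mul]
  nlinarith [hgap]

lemma strictConvexOn_objective (hc : 0 < c) (hβ : 0 ≤ β) :
    StrictConvexOn ℝ univ (objective c s β) := by
  have hsplit : objective c s β = (fun r => c / 2 * r ^ 2 - s * r) + fun r => β • ‖r‖ := by
    funext r
    simp [objective, Real.norm_eq_abs]
  rw [hsplit]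
  exact (strictConvexOn_quadratic hc s).add_convexOn (convexOn_univ_norm.smul hβ)

lemma softThreshold_of_abs_le (hc : 0 ≤ c) (hs : |s| ≤ β) : softThreshold c β s = 0 := by
  rw [softThreshold, max_eq_left (div_nonpos_of_nonpos_of_nonneg (sub_nonpos.2 hs) hc), zero_mul]

lemma softThreshold_of_lt (hc : 0 ≤ c) (hβ : 0 ≤ β) (hs : β < s) :
    softThreshold c β s = (s - β) / c := by
  have hs0 : 0 < s := hβ.trans_lt hs
  rw [softThreshold, abs_of_pos hs0, Real.sign_of_pos hs0, mul_one,
    max_eq_right (div_nonneg (sub_nonneg.2 hs.le) hc)]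

lemma softThreshold_of_lt_neg (hc : 0 ≤ c) (hβ : 0 ≤ β) (hs : s < -β) :
    softThreshold c β s = (s + β) / c := by
  have hs0 : s < 0 := hs.trans_le (neg_nonpos.2 hβ)
  rw [softThreshold, abs_of_neg hs0, Real.sign_of_neg hs0,
    max_eq_right (div_nonneg (by linarith) hc)]
  ring

lemma isMinOn_softThreshold (hc : 0 < c) (hβ : 0 ≤ β) :
    IsMinOn (objective c s β) univ (softThreshold c β s) := by
  intro r _
  set u := softThreshold c β s
  have hfirst : 0 ≤ (c * u - s) * (r - u) + β * (|r| - |u|) := by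
    rcases le_or_gt |s| β with hsβ | hsβ
    · have hu : u = 0 := softThreshold_of_abs_le hc.le hsβ
      have hsr : s * r ≤ β * |r| := calc
        s * r ≤ |s| * |r| := (le_abs_self _).trans (abs_mul s r).le
        _ ≤ β * |r| := mul_le_mul_of_nonneg_right hsβ (abs_nonneg r)
      rw [hu, abs_zero]
      linarith
    rcases lt_abs.1 hsβ with hs | hs
    · have hu : u = (s - β) / c := softThreshold_of_lt hc.le hβ hs
      have hu0 : 0 ≤ u := hu ▸ div_nonneg (by linarith) hc.le
      have hcu : c * u - s = -β := by rw [hu]; field_simp; ring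
      rw [hcu, abs_of_nonneg hu0]
      nlinarith [mul_nonneg hβ (sub_nonneg.2 (le_abs_self r))]
    · have hu : u = (s + β) / c := softThreshold_of_lt_neg hc.le hβ (by linarith)
      have hu0 : u ≤ 0 := hu ▸ div_nonpos_of_nonpos_of_nonneg (by linarith) hc.le
      have hcu : c * u - s = β := by rw [hu]; field_simp; ring
      rw [hcu, abs_of_nonpos hu0]
      nlinarith [mul_nonneg hβ (sub_nonneg.2 (neg_abs_le r))]
  show objective c s β u ≤ objective c s β r
  unfold objective
  nlinarith [hfirst, mul_nonneg hc.le (sq_nonneg (r - u))]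

lemma softThreshold_eq_relu (hc : 0 ≤ c) (hβ : 0 ≤ β) :
    softThreshold c β s = max 0 ((s - β) / c) - max 0 ((-s - β) / c) := by
  have relu_eq_zero : ∀ {x : ℝ}, x ≤ 0 → max 0 (x / c) = 0 := fun hx =>
    max_eq_left (div_nonpos_of_nonpos_of_nonneg hx hc)
  have relu_eq_self : ∀ {x : ℝ}, 0 ≤ x → max 0 (x / c) = x / c := fun hx =>
    max_eq_right (div_nonneg hx hc)
  rcases le_or_gt |s| β with hsβ | hsβ
  · rw [softThreshold_of_abs_le hc hsβ, relu_eq_zero (by linarith [le_abs_self s]),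
      relu_eq_zero (by linarith [neg_abs_le s]), sub_zero]
  rcases lt_abs.1 hsβ with hs | hs
  · rw [softThreshold_of_lt hc hβ hs, relu_eq_self (by linarith), relu_eq_zero (by linarith),
      sub_zero]
  · rw [softThreshold_of_lt_neg hc hβ (by linarith), relu_eq_zero (by linarith),
      relu_eq_self (by linarith)]
    ring

end Prox

end

/-- for `ψ(r) = β|r| + I_{[a,b]}(r)` with `a ≤ 0 ≤ b`, `β ≥ 0`,
`λ > 0`, `τ ≥ 0`, the resolvent `((λ+τ) + ∂ψ)⁻¹(s)` — i.e. the unique minimizer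
over `r ∈ [a,b]` of `(λ+τ)/2 · r² − s r + β|r|` — equals
`proj_{[a,b]}([(|s| − β)/(λ+τ)]₊ · sgn(s))`, and this value admits the ReLU
representation
`b − σ(b − a − σ(σ((s−β)/(λ+τ)) − σ((−s−β)/(λ+τ)) − a))` with `σ(r) = max 0 r`. -/
theorem stmt10 (a b β lam τ : ℝ)
    (ha : a ≤ 0) (hb : 0 ≤ b) (hβ : 0 ≤ β) (hlam : 0 < lam) (hτ : 0 ≤ τ) (s : ℝ) :
    let σ : ℝ → ℝ := fun r => max 0 r
    let t : ℝ := min b (max a (σ ((|s| - β) / (lam + τ)) * Real.sign s))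
    -- `t` is the resolvent: it lies in `[a,b]` and minimizes the objective there
    (a ≤ t ∧ t ≤ b) ∧
    (∀ r : ℝ, a ≤ r → r ≤ b →
      (lam + τ) / 2 * t ^ 2 - s * t + β * |t|
        ≤ (lam + τ) / 2 * r ^ 2 - s * r + β * |r|) ∧
    (∀ r : ℝ, a ≤ r → r ≤ b →
      (lam + τ) / 2 * r ^ 2 - s * r + β * |r|
        = (lam + τ) / 2 * t ^ 2 - s * t + β * |t| → r = t) ∧
    -- ReLU representation
    t = b - σ (b - a - σ (σ ((s - β) / (lam + τ)) - σ ((-s - β) / (lam + τ)) - a)) := by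
  intro σ t
  have hc : 0 < lam + τ := add_pos_of_pos_of_nonneg hlam hτ
  have hconv := Prox.strictConvexOn_objective (s := s) hc hβ
  have hmin : IsMinOn (Prox.objective (lam + τ) s β) (Icc a b) t :=
    isMinOn_Icc_min_max hconv.convexOn (Prox.isMinOn_softThreshold hc hβ) a b
  have hmem : t ∈ Icc a b := ⟨le_min (ha.trans hb) (le_max_left _ _), min_le_left _ _⟩
  refine ⟨hmem, fun r har hrb => hmin ⟨har, hrb⟩, fun r har hrb heq => ?_, ?_⟩
  · have hminr : IsMinOn (Prox.objective (lam + τ) s β) (Icc a b) r :=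
      isMinOn_iff.2 fun x hx => heq.le.trans (hmin hx)
    exact (hconv.subset (subset_univ _) (convex_Icc a b)).eq_of_isMinOn hminr hmin ⟨har, hrb⟩ hmem
  · show min b (max a (Prox.softThreshold (lam + τ) β s)) = _
    rw [min_max_eq_sub_relu, Prox.softThreshold_eq_relu hc.le hβ]
end
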